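/- Let F be a field of characteristic ≠ 2. Suppose A = a₀·1 + a and B = b₀·1 + b in M₂(F) are invertible, A − 1 is invertible, AB ≠ BA, and A, B satisfy the fundamental equation. Then the linear relation (tr(A) − det(A))·det(b)·a + (det(A) − tr(A))·(a·b)·b + (b₀·(det(A) − tr(A)) + 2(A·B))·(a×b) = 0 holds in M₂(F). -/
import Mathlib

open Matrix

/-- The inner product of traceless 2×2 matrices: `a·b = -(1/2) tr(ab)`. -/
noncomputable def matInner {F : Type*} [Field F] (a b : Matrix (Fin 2) (Fin 2) F) : F :=
  -((2 : F)⁻¹ * (a * b).trace)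

/-- The cross product of traceless 2×2 matrices: `a×b = (ab - ba)/2`. -/
noncomputable def matCross {F : Type*} [Field F] (a b : Matrix (Fin 2) (Fin 2) F) :
    Matrix (Fin 2) (Fin 2) F :=
  (2 : F)⁻¹ • (a * b - b * a)

/-- The bilinear form on general 2×2 matrices: `A·B = (1/2) tr(A adj(B))`. -/
noncomputable def matDot {F : Type*} [Field F] (A B : Matrix (Fin 2) (Fin 2) F) : F :=
  (2 : F)⁻¹ * (A * B.adjugate).trace

set_option maxHeartbeats 1600000 in
/-- the linear relation satisfied by non-commuting invertible
solutions `A = a₀·1 + a`, `B = b₀·1 + b` of the fundamental equation. -/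
theorem stmt2 {F : Type*} [Field F] (h2 : (2 : F) ≠ 0)
    (a₀ b₀ : F) (a b A B : Matrix (Fin 2) (Fin 2) F)
    (ha : a.trace = 0) (hb : b.trace = 0)
    (hAdef : A = a₀ • (1 : Matrix (Fin 2) (Fin 2) F) + a)
    (hBdef : B = b₀ • (1 : Matrix (Fin 2) (Fin 2) F) + b)
    (hA : IsUnit A) (hB : IsUnit B) (hA1 : IsUnit (A - 1))
    (hnc : A * B ≠ B * A)
    (hfund : A⁻¹ * B⁻¹ * A * B - B⁻¹ * A * B = B * A⁻¹ * B⁻¹ * A - A) :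
    ((A.trace - A.det) * b.det) • a + ((A.det - A.trace) * matInner a b) • b +
      (b₀ * (A.det - A.trace) + 2 * matDot A B) • matCross a b = 0 := by
  have hdA : IsUnit A.det := (Matrix.isUnit_iff_isUnit_det A).mp hA
  have hdB : IsUnit B.det := (Matrix.isUnit_iff_isUnit_det B).mp hB
  have hadjA : A.adjugate = A.det • A⁻¹ := by
    calc A.adjugate = A.adjugate * (A * A⁻¹) := by
          rw [Matrix.mul_nonsing_inv A hdA, mul_one]
    _ = (A.adjugate * A) * A⁻¹ := by rw [mul_assoc]
    _ = A.det • A⁻¹ := by rw [Matrix.adjugate_mul, Matrix.smul_mul, one_mul]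
  have hadjB : B.adjugate = B.det • B⁻¹ := by
    calc B.adjugate = B.adjugate * (B * B⁻¹) := by
          rw [Matrix.mul_nonsing_inv B hdB, mul_one]
    _ = (B.adjugate * B) * B⁻¹ := by rw [mul_assoc]
    _ = B.det • B⁻¹ := by rw [Matrix.adjugate_mul, Matrix.smul_mul, one_mul]
  simp only [mul_assoc] at hfund
  have hP : A.adjugate * (B.adjugate * (A * B)) - A.det • (B.adjugate * (A * B)) =
      B * (A.adjugate * (B.adjugate * A)) - (A.det * B.det) • A := by
    rw [hadjA, hadjB]
    simp only [smul_mul_assoc, mul_smul_comm, smul_smul]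
    linear_combination (norm := module) (A.det * B.det) • hfund
  subst hAdef hBdef
  rw [Matrix.trace_fin_two] at ha hb
  have ht : (2:F) * (2:F)⁻¹ = 1 := mul_inv_cancel₀ h2
  have e00 := congrFun (congrFun hP 0) 0
  have e01 := congrFun (congrFun hP 0) 1
  have e10 := congrFun (congrFun hP 1) 0
  have e11 := congrFun (congrFun hP 1) 1
  simp only [Matrix.adjugate_fin_two, Matrix.one_fin_two, Matrix.mul_apply, Matrix.smul_apply,
    Matrix.add_apply, Matrix.sub_apply, Matrix.det_fin_two, Fin.sum_univ_two, smul_eq_mul,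
    Matrix.cons_val', Matrix.cons_val_zero, Matrix.cons_val_one, Matrix.head_cons,
    Matrix.head_fin_const, Matrix.empty_val', Matrix.cons_val_fin_one, Matrix.of_apply]
    at e00 e01 e10 e11
  unfold matInner matCross matDot
  ext i j
  fin_cases i <;> fin_cases j <;>
    simp only [Matrix.adjugate_fin_two, Matrix.one_fin_two, Matrix.mul_apply, Matrix.smul_apply,
      Matrix.add_apply, Matrix.sub_apply, Matrix.zero_apply, Matrix.det_fin_two,
      Matrix.trace_fin_two, Fin.sum_univ_two, smul_eq_mul, Fin.isValue, Fin.zero_eta, Fin.mk_one,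
      Matrix.cons_val', Matrix.cons_val_zero, Matrix.cons_val_one, Matrix.head_cons,
      Matrix.head_fin_const, Matrix.empty_val', Matrix.cons_val_fin_one, Matrix.of_apply]
  · linear_combination (-(2:F)⁻¹) * e00 + ((-1 : F) * a 1 1 * b 0 1 * b 1 0 * (2:F)⁻¹ + (1 : F) * a 1 1 * b 0 0 * b 1 1 * (2:F)⁻¹ + (1 : F) * a 1 0 * b 0 0 * b 0 1 * (2:F)⁻¹ + (-2 : F) * a 1 0 * b 0 0 * b 0 1 * (2:F)⁻¹ * (2:F)⁻¹ + (1 : F) * a 0 1 * b 1 0 * b 1 1 * (2:F)⁻¹ + (2 : F) * a 0 1 * b 0 0 * b 1 0 * (2:F)⁻¹ * (2:F)⁻¹ + (-1 : F) * a 0 1 * a 1 0 * b 0 1 * b 1 0 * (2:F)⁻¹ + (1 : F) * a 0 1 * a 1 0 * b 0 0 * b 1 1 * (2:F)⁻¹ + (-1 : F) * a 0 0 * b 0 1 * b 1 0 + (1 : F) * a 0 0 * b 0 1 * b 1 0 * (2:F)⁻¹ + (1 : F) * a 0 0 * b 0 0 * b 1 1 + (1 : F) * a 0 0 * b 0 0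 * b 0 0 * (2:F)⁻¹ + (1 : F) * a 0 0 * a 1 1 * b 0 1 * b 1 0 * (2:F)⁻¹ + (-1 : F) * a 0 0 * a 1 1 * b 0 0 * b 1 1 * (2:F)⁻¹ + (-1 : F) * a 0 0 * a 0 1 * b 1 0 * b 1 1 * (2:F)⁻¹ + (-1 : F) * a 0 0 * a 0 1 * b 0 0 * b 1 0 * (2:F)⁻¹ + (1 : F) * a 0 0 * a 0 0 * b 0 1 * b 1 0 + (-2 : F) * a 0 0 * a 0 0 * b 0 1 * b 1 0 * (2:F)⁻¹ + (-1 : F) * a 0 0 * a 0 0 * b 0 0 * b 1 1 + (1 : F) * a 0 0 * a 0 0 * b 0 0 * b 1 1 * (2:F)⁻¹ + (-1 : F) * a 0 0 * a 0 0 * b 0 0 * b 0 0 * (2:F)⁻¹ + (1 : F) * b₀ * a 1 0 * b 0 1 * (2:F)⁻¹ + (-2 : F) * b₀ * a 1 0 * b 0 1 * (2:F)⁻¹ * (2:F)⁻¹ + (-1 : F) * b₀ * a 0 1 * b 1 0 * (2:F)⁻¹ + (2 : F) * b₀ * a 0 1 * b 1 0 * (2:F)⁻¹ * (2:F)⁻¹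 + (-2 : F) * a₀ * b 0 1 * b 1 0 * (2:F)⁻¹ + (2 : F) * a₀ * b 0 0 * b 1 1 * (2:F)⁻¹ + (1 : F) * a₀ * a 1 1 * b 0 1 * b 1 0 * (2:F)⁻¹ + (-1 : F) * a₀ * a 1 1 * b 0 0 * b 1 1 * (2:F)⁻¹ + (-1 : F) * a₀ * a 0 1 * b 1 0 * b 1 1 * (2:F)⁻¹ + (-1 : F) * a₀ * a 0 1 * b 0 0 * b 1 0 * (2:F)⁻¹ + (1 : F) * a₀ * a 0 0 * b 0 1 * b 1 0 + (-1 : F) * a₀ * a 0 0 * b 0 1 * b 1 0 * (2:F)⁻¹ + (-1 : F) * a₀ * a 0 0 * b 0 0 * b 1 1 + (-1 : F) * a₀ * a 0 0 * b 0 0 * b 0 0 * (2:F)⁻¹ + (1 : F) * a₀ * a₀ * b 0 1 * b 1 0 * (2:F)⁻¹ + (-1 : F) * a₀ * a₀ * b 0 0 * b 1 1 * (2:F)⁻¹) * ha + ((1 : F) * a 0 1 * a 0 1 * a 1 0 * b 1 0 * (2:F)⁻¹ + (1 : F) * a 0 0 * a 1 0 * b 0 1 * (2:F)⁻¹ + (-2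 : F) * a 0 0 * a 1 0 * b 0 1 * (2:F)⁻¹ * (2:F)⁻¹ + (-1 : F) * a 0 0 * a 0 1 * b 1 0 * (2:F)⁻¹ + (2 : F) * a 0 0 * a 0 1 * b 1 0 * (2:F)⁻¹ * (2:F)⁻¹ + (1 : F) * a 0 0 * a 0 1 * a 1 0 * b 0 0 + (-1 : F) * a 0 0 * a 0 1 * a 1 0 * b 0 0 * (2:F)⁻¹ + (1 : F) * a 0 0 * a 0 0 * a 0 1 * b 1 0 * (2:F)⁻¹ + (1 : F) * a 0 0 * a 0 0 * a 0 0 * b 0 0 + (-1 : F) * a 0 0 * a 0 0 * a 0 0 * b 0 0 * (2:F)⁻¹ + (1 : F) * a₀ * a 1 0 * b 0 1 * (2:F)⁻¹ + (-2 : F) * a₀ * a 1 0 * b 0 1 * (2:F)⁻¹ * (2:F)⁻¹ + (1 : F) * a₀ * a 0 1 * b 1 0 * (2:F)⁻¹ + (2 : F) * a₀ * a 0 1 * b 1 0 * (2:F)⁻¹ * (2:F)⁻¹ + (2 : F) * a₀ * a 0 0 * b 0 0 + (-2 : F) * a₀ * a 0 0 * b 0 0 * (2:F)⁻¹ + (-1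 : F) * a₀ * a₀ * a 0 1 * b 1 0 * (2:F)⁻¹ + (-1 : F) * a₀ * a₀ * a 0 0 * b 0 0 + (1 : F) * a₀ * a₀ * a 0 0 * b 0 0 * (2:F)⁻¹) * hb + ((1 : F) * a 1 0 * a 1 0 * b 0 1 * b 0 1 * (2:F)⁻¹ + (-1 : F) * a 0 1 * a 0 1 * b 1 0 * b 1 0 * (2:F)⁻¹ + (2 : F) * a 0 0 * a 1 0 * b 0 0 * b 0 1 * (2:F)⁻¹ + (-2 : F) * a 0 0 * a 0 1 * b 0 0 * b 1 0 * (2:F)⁻¹ + (1 : F) * a 0 0 * a 0 1 * a 1 0 * b 0 1 * b 1 0 + (1 : F) * a 0 0 * a 0 1 * a 1 0 * b 0 0 * b 0 0 + (1 : F) * a 0 0 * a 0 0 * a 0 0 * b 0 1 * b 1 0 + (1 : F) * a 0 0 * a 0 0 * a 0 0 * b 0 0 * b 0 0 + (2 : F) * a₀ * a 0 0 * b 0 1 * b 1 0 + (2 : F) * a₀ * a 0 0 * b 0 0 * b 0 0 + (-2 : F) * a₀ * b₀ * a 1 0 * b 0 1 * (2:F)⁻¹ + (2 : F) * a₀ *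 b₀ * a 0 1 * b 1 0 * (2:F)⁻¹ + (-1 : F) * a₀ * a₀ * a 0 0 * b 0 1 * b 1 0 + (-1 : F) * a₀ * a₀ * a 0 0 * b 0 0 * b 0 0) * ht
  · linear_combination (-(2:F)⁻¹) * e01 + ((1 : F) * a 1 1 * b 0 0 * b 0 1 * (2:F)⁻¹ + (-2 : F) * a 1 1 * b 0 0 * b 0 1 * (2:F)⁻¹ * (2:F)⁻¹ + (-1 : F) * a 1 0 * b 0 1 * b 0 1 * (2:F)⁻¹ + (2 : F) * a 1 0 * b 0 1 * b 0 1 * (2:F)⁻¹ * (2:F)⁻¹ + (1 : F) * a 0 1 * b 1 1 * b 1 1 * (2:F)⁻¹ + (-1 : F) * a 0 1 * b 0 1 * b 1 0 + (1 : F) * a 0 1 * b 0 1 * b 1 0 * (2:F)⁻¹ + (2 : F) * a 0 1 * b 0 1 * b 1 0 * (2:F)⁻¹ * (2:F)⁻¹ + (1 : F) * a 0 1 * b 0 0 * b 1 1 + (-2 : F) * a 0 1 * b 0 0 * b 1 1 * (2:F)⁻¹ + (2 : F) * a 0 1 * b 0 0 * b 1 1 * (2:F)⁻¹ * (2:F)⁻¹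 + (1 : F) * a 0 1 * b 0 0 * b 0 0 * (2:F)⁻¹ + (-2 : F) * a 0 1 * b 0 0 * b 0 0 * (2:F)⁻¹ * (2:F)⁻¹ + (2 : F) * a 0 0 * b 0 1 * b 1 1 * (2:F)⁻¹ + (-2 : F) * a 0 0 * b 0 1 * b 1 1 * (2:F)⁻¹ * (2:F)⁻¹ + (-1 : F) * a 0 0 * b 0 0 * b 0 1 * (2:F)⁻¹ + (4 : F) * a 0 0 * b 0 0 * b 0 1 * (2:F)⁻¹ * (2:F)⁻¹ + (-1 : F) * a 0 0 * a 0 1 * b 1 1 * b 1 1 * (2:F)⁻¹ + (1 : F) * a 0 0 * a 0 1 * b 0 1 * b 1 0 + (-2 : F) * a 0 0 * a 0 1 * b 0 1 * b 1 0 * (2:F)⁻¹ + (-1 : F) * a 0 0 * a 0 1 * b 0 0 * b 1 1 + (1 : F) * a 0 0 * a 0 1 * b 0 0 * b 1 1 * (2:F)⁻¹ + (-1 : F) * a 0 0 * a 0 0 * b 0 1 * b 1 1 * (2:F)⁻¹ + (-1 : F) * a 0 0 * a 0 0 * b 0 0 * b 0 1 * (2:F)⁻¹ + (1 : F) * b₀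 * a 1 1 * b 0 1 * (2:F)⁻¹ + (-2 : F) * b₀ * a 1 1 * b 0 1 * (2:F)⁻¹ * (2:F)⁻¹ + (-1 : F) * b₀ * a 0 1 * b 1 1 * (2:F)⁻¹ + (2 : F) * b₀ * a 0 1 * b 1 1 * (2:F)⁻¹ * (2:F)⁻¹ + (1 : F) * b₀ * a 0 1 * b 0 0 * (2:F)⁻¹ + (-2 : F) * b₀ * a 0 1 * b 0 0 * (2:F)⁻¹ * (2:F)⁻¹ + (-1 : F) * b₀ * a 0 0 * b 0 1 * (2:F)⁻¹ + (2 : F) * b₀ * a 0 0 * b 0 1 * (2:F)⁻¹ * (2:F)⁻¹ + (1 : F) * a₀ * b 0 1 * b 1 1 * (2:F)⁻¹ + (-2 : F) * a₀ * b 0 1 * b 1 1 * (2:F)⁻¹ * (2:F)⁻¹ + (1 : F) * a₀ * b 0 0 * b 0 1 * (2:F)⁻¹ + (-2 : F) * a₀ * b 0 0 * b 0 1 * (2:F)⁻¹ * (2:F)⁻¹ + (-1 : F) * a₀ * a 0 1 * b 1 1 * b 1 1 * (2:F)⁻¹ + (1 : F) * a₀ * a 0 1 * b 0 1 * b 1 0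 + (-2 : F) * a₀ * a 0 1 * b 0 1 * b 1 0 * (2:F)⁻¹ + (-1 : F) * a₀ * a 0 1 * b 0 0 * b 1 1 + (1 : F) * a₀ * a 0 1 * b 0 0 * b 1 1 * (2:F)⁻¹ + (-1 : F) * a₀ * a 0 0 * b 0 1 * b 1 1 * (2:F)⁻¹ + (-1 : F) * a₀ * a 0 0 * b 0 0 * b 0 1 * (2:F)⁻¹ + (2 : F) * a₀ * b₀ * b 0 1 * (2:F)⁻¹ + (-4 : F) * a₀ * b₀ * b 0 1 * (2:F)⁻¹ * (2:F)⁻¹) * ha + ((1 : F) * a 0 1 * a 1 0 * b 0 1 * (2:F)⁻¹ + (-2 : F) * a 0 1 * a 1 0 * b 0 1 * (2:F)⁻¹ * (2:F)⁻¹ + (1 : F) * a 0 1 * a 0 1 * b 1 0 * (2:F)⁻¹ + (-2 : F) * a 0 1 * a 0 1 * b 1 0 * (2:F)⁻¹ * (2:F)⁻¹ + (1 : F) * a 0 1 * a 0 1 * a 1 0 * b 1 1 * (2:F)⁻¹ + (1 : F) * a 0 1 * a 0 1 * a 1 0 * b 0 0 + (-2 : F) * a 0 1 * a 0 1 * a 1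 0 * b 0 0 * (2:F)⁻¹ + (-1 : F) * a 0 0 * a 0 1 * b 1 1 * (2:F)⁻¹ + (2 : F) * a 0 0 * a 0 1 * b 1 1 * (2:F)⁻¹ * (2:F)⁻¹ + (3 : F) * a 0 0 * a 0 1 * b 0 0 * (2:F)⁻¹ + (-6 : F) * a 0 0 * a 0 1 * b 0 0 * (2:F)⁻¹ * (2:F)⁻¹ + (1 : F) * a 0 0 * a 0 1 * a 1 0 * b 0 1 * (2:F)⁻¹ + (-2 : F) * a 0 0 * a 0 0 * b 0 1 * (2:F)⁻¹ + (4 : F) * a 0 0 * a 0 0 * b 0 1 * (2:F)⁻¹ * (2:F)⁻¹ + (1 : F) * a 0 0 * a 0 0 * a 0 1 * b 1 1 * (2:F)⁻¹ + (1 : F) * a 0 0 * a 0 0 * a 0 1 * b 0 0 + (-2 : F) * a 0 0 * a 0 0 * a 0 1 * b 0 0 * (2:F)⁻¹ + (1 : F) * a 0 0 * a 0 0 * a 0 0 * b 0 1 * (2:F)⁻¹ + (1 : F) * a₀ * a 0 1 * b 1 1 * (2:F)⁻¹ + (2 : F) * a₀ * a 0 1 * b 1 1 * (2:F)⁻¹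 * (2:F)⁻¹ + (2 : F) * a₀ * a 0 1 * b 0 0 + (-3 : F) * a₀ * a 0 1 * b 0 0 * (2:F)⁻¹ + (-2 : F) * a₀ * a 0 1 * b 0 0 * (2:F)⁻¹ * (2:F)⁻¹ + (4 : F) * a₀ * a 0 0 * b 0 1 * (2:F)⁻¹ * (2:F)⁻¹ + (-2 : F) * a₀ * b₀ * a 0 1 * (2:F)⁻¹ + (4 : F) * a₀ * b₀ * a 0 1 * (2:F)⁻¹ * (2:F)⁻¹ + (-1 : F) * a₀ * a₀ * a 0 1 * b 1 1 * (2:F)⁻¹ + (-1 : F) * a₀ * a₀ * a 0 1 * b 0 0 + (2 : F) * a₀ * a₀ * a 0 1 * b 0 0 * (2:F)⁻¹ + (-1 : F) * a₀ * a₀ * a 0 0 * b 0 1 * (2:F)⁻¹) * hb + ((2 : F) * a 0 1 * a 1 0 * b 0 0 * b 0 1 * (2:F)⁻¹ + (2 : F) * a 0 1 * a 0 1 * b 0 0 * b 1 0 * (2:F)⁻¹ + (1 : F) * a 0 1 * a 0 1 * a 1 0 * b 0 1 * b 1 0 + (1 : F) * a 0 1 * a 0 1 * a 1 0 * b 0 0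 * b 0 0 + (-2 : F) * a 0 0 * a 1 0 * b 0 1 * b 0 1 * (2:F)⁻¹ + (-2 : F) * a 0 0 * a 0 1 * b 0 1 * b 1 0 * (2:F)⁻¹ + (4 : F) * a 0 0 * a 0 1 * b 0 0 * b 0 0 * (2:F)⁻¹ + (-4 : F) * a 0 0 * a 0 0 * b 0 0 * b 0 1 * (2:F)⁻¹ + (1 : F) * a 0 0 * a 0 0 * a 0 1 * b 0 1 * b 1 0 + (1 : F) * a 0 0 * a 0 0 * a 0 1 * b 0 0 * b 0 0 + (2 : F) * a₀ * a 0 1 * b 0 1 * b 1 0 + (2 : F) * a₀ * a 0 1 * b 0 0 * b 0 0 + (-4 : F) * a₀ * b₀ * a 0 1 * b 0 0 * (2:F)⁻¹ + (4 : F) * a₀ * b₀ * a 0 0 * b 0 1 * (2:F)⁻¹ + (-1 : F) * a₀ * a₀ * a 0 1 * b 0 1 * b 1 0 + (-1 : F) * a₀ * a₀ * a 0 1 * b 0 0 * b 0 0) * ht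
  · linear_combination (-(2:F)⁻¹) * e10 + ((1 : F) * a 1 1 * b 1 0 * b 1 1 * (2:F)⁻¹ + (2 : F) * a 1 1 * b 0 0 * b 1 0 * (2:F)⁻¹ * (2:F)⁻¹ + (-1 : F) * a 1 0 * b 0 1 * b 1 0 + (3 : F) * a 1 0 * b 0 1 * b 1 0 * (2:F)⁻¹ + (-2 : F) * a 1 0 * b 0 1 * b 1 0 * (2:F)⁻¹ * (2:F)⁻¹ + (1 : F) * a 1 0 * b 0 0 * b 1 1 + (-2 : F) * a 1 0 * b 0 0 * b 1 1 * (2:F)⁻¹ * (2:F)⁻¹ + (2 : F) * a 1 0 * b 0 0 * b 0 0 * (2:F)⁻¹ * (2:F)⁻¹ + (1 : F) * a 0 1 * b 1 0 * b 1 0 * (2:F)⁻¹ + (-2 : F) * a 0 1 * b 1 0 * b 1 0 * (2:F)⁻¹ * (2:F)⁻¹ + (1 : F) * a 0 1 * a 1 0 * b 1 0 * b 1 1 * (2:F)⁻¹ + (1 : F) * a 0 1 * a 1 0 * b 0 0 * b 1 0 * (2:F)⁻¹ + (-1 : F) * a 0 0 * b 1 0 * b 1 1 * (2:F)⁻¹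 + (2 : F) * a 0 0 * b 1 0 * b 1 1 * (2:F)⁻¹ * (2:F)⁻¹ + (2 : F) * a 0 0 * b 0 0 * b 1 0 * (2:F)⁻¹ + (-4 : F) * a 0 0 * b 0 0 * b 1 0 * (2:F)⁻¹ * (2:F)⁻¹ + (-1 : F) * a 0 0 * a 1 1 * b 1 0 * b 1 1 * (2:F)⁻¹ + (-1 : F) * a 0 0 * a 1 1 * b 0 0 * b 1 0 * (2:F)⁻¹ + (1 : F) * a 0 0 * a 1 0 * b 0 1 * b 1 0 + (-2 : F) * a 0 0 * a 1 0 * b 0 1 * b 1 0 * (2:F)⁻¹ + (-1 : F) * a 0 0 * a 1 0 * b 0 0 * b 1 1 + (1 : F) * a 0 0 * a 1 0 * b 0 0 * b 1 1 * (2:F)⁻¹ + (-1 : F) * a 0 0 * a 1 0 * b 0 0 * b 0 0 * (2:F)⁻¹ + (1 : F) * a 0 0 * a 0 0 * b 1 0 * b 1 1 * (2:F)⁻¹ + (1 : F) * a 0 0 * a 0 0 * b 0 0 * b 1 0 * (2:F)⁻¹ + (-1 : F) * b₀ * a 1 1 * b 1 0 * (2:F)⁻¹ + (2 : F) * b₀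 * a 1 1 * b 1 0 * (2:F)⁻¹ * (2:F)⁻¹ + (1 : F) * b₀ * a 1 0 * b 1 1 * (2:F)⁻¹ + (-2 : F) * b₀ * a 1 0 * b 1 1 * (2:F)⁻¹ * (2:F)⁻¹ + (-1 : F) * b₀ * a 1 0 * b 0 0 * (2:F)⁻¹ + (2 : F) * b₀ * a 1 0 * b 0 0 * (2:F)⁻¹ * (2:F)⁻¹ + (1 : F) * b₀ * a 0 0 * b 1 0 * (2:F)⁻¹ + (-2 : F) * b₀ * a 0 0 * b 1 0 * (2:F)⁻¹ * (2:F)⁻¹ + (1 : F) * a₀ * b 1 0 * b 1 1 * (2:F)⁻¹ + (2 : F) * a₀ * b 1 0 * b 1 1 * (2:F)⁻¹ * (2:F)⁻¹ + (1 : F) * a₀ * b 0 0 * b 1 0 * (2:F)⁻¹ + (2 : F) * a₀ * b 0 0 * b 1 0 * (2:F)⁻¹ * (2:F)⁻¹ + (-1 : F) * a₀ * a 1 1 * b 1 0 * b 1 1 * (2:F)⁻¹ + (-1 : F) * a₀ * a 1 1 * b 0 0 * b 1 0 * (2:F)⁻¹ + (1 : F) * a₀ * a 1 0 * b 0 1 *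 b 1 0 + (-2 : F) * a₀ * a 1 0 * b 0 1 * b 1 0 * (2:F)⁻¹ + (-1 : F) * a₀ * a 1 0 * b 0 0 * b 1 1 + (1 : F) * a₀ * a 1 0 * b 0 0 * b 1 1 * (2:F)⁻¹ + (-1 : F) * a₀ * a 1 0 * b 0 0 * b 0 0 * (2:F)⁻¹ + (-2 : F) * a₀ * b₀ * b 1 0 * (2:F)⁻¹ + (4 : F) * a₀ * b₀ * b 1 0 * (2:F)⁻¹ * (2:F)⁻¹ + (-1 : F) * a₀ * a₀ * b 1 0 * b 1 1 * (2:F)⁻¹ + (-1 : F) * a₀ * a₀ * b 0 0 * b 1 0 * (2:F)⁻¹) * ha + ((-1 : F) * a 1 0 * a 1 0 * b 0 1 * (2:F)⁻¹ + (2 : F) * a 1 0 * a 1 0 * b 0 1 * (2:F)⁻¹ * (2:F)⁻¹ + (-1 : F) * a 0 1 * a 1 0 * b 1 0 * (2:F)⁻¹ + (2 : F) * a 0 1 * a 1 0 * b 1 0 * (2:F)⁻¹ * (2:F)⁻¹ + (1 : F) * a 0 1 * a 1 0 * a 1 0 * b 0 0 + (-1 : F) * a 0 1 * a 1 0 * a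 1 0 * b 0 0 * (2:F)⁻¹ + (1 : F) * a 0 0 * a 1 0 * b 1 1 * (2:F)⁻¹ + (-2 : F) * a 0 0 * a 1 0 * b 1 1 * (2:F)⁻¹ * (2:F)⁻¹ + (-3 : F) * a 0 0 * a 1 0 * b 0 0 * (2:F)⁻¹ + (6 : F) * a 0 0 * a 1 0 * b 0 0 * (2:F)⁻¹ * (2:F)⁻¹ + (-1 : F) * a 0 0 * a 0 1 * a 1 0 * b 1 0 * (2:F)⁻¹ + (2 : F) * a 0 0 * a 0 0 * b 1 0 * (2:F)⁻¹ + (-4 : F) * a 0 0 * a 0 0 * b 1 0 * (2:F)⁻¹ * (2:F)⁻¹ + (1 : F) * a 0 0 * a 0 0 * a 1 0 * b 0 0 + (-1 : F) * a 0 0 * a 0 0 * a 1 0 * b 0 0 * (2:F)⁻¹ + (-1 : F) * a 0 0 * a 0 0 * a 0 0 * b 1 0 * (2:F)⁻¹ + (1 : F) * a₀ * a 1 0 * b 1 1 * (2:F)⁻¹ + (-2 : F) * a₀ * a 1 0 * b 1 1 * (2:F)⁻¹ * (2:F)⁻¹ + (2 : F) * a₀ * a 1 0 * b 0 0 + (-3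 : F) * a₀ * a 1 0 * b 0 0 * (2:F)⁻¹ + (2 : F) * a₀ * a 1 0 * b 0 0 * (2:F)⁻¹ * (2:F)⁻¹ + (-4 : F) * a₀ * a 0 0 * b 1 0 * (2:F)⁻¹ * (2:F)⁻¹ + (2 : F) * a₀ * b₀ * a 1 0 * (2:F)⁻¹ + (-4 : F) * a₀ * b₀ * a 1 0 * (2:F)⁻¹ * (2:F)⁻¹ + (-1 : F) * a₀ * a₀ * a 1 0 * b 0 0 + (1 : F) * a₀ * a₀ * a 1 0 * b 0 0 * (2:F)⁻¹ + (1 : F) * a₀ * a₀ * a 0 0 * b 1 0 * (2:F)⁻¹) * hb + ((-2 : F) * a 1 0 * a 1 0 * b 0 0 * b 0 1 * (2:F)⁻¹ + (-2 : F) * a 0 1 * a 1 0 * b 0 0 * b 1 0 * (2:F)⁻¹ + (1 : F) * a 0 1 * a 1 0 * a 1 0 * b 0 1 * b 1 0 + (1 : F) * a 0 1 * a 1 0 * a 1 0 * b 0 0 * b 0 0 + (2 : F) * a 0 0 * a 1 0 * b 0 1 * b 1 0 * (2:F)⁻¹ + (-4 : F) * a 0 0 * a 1 0 * b 0 0 *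 b 0 0 * (2:F)⁻¹ + (2 : F) * a 0 0 * a 0 1 * b 1 0 * b 1 0 * (2:F)⁻¹ + (4 : F) * a 0 0 * a 0 0 * b 0 0 * b 1 0 * (2:F)⁻¹ + (1 : F) * a 0 0 * a 0 0 * a 1 0 * b 0 1 * b 1 0 + (1 : F) * a 0 0 * a 0 0 * a 1 0 * b 0 0 * b 0 0 + (2 : F) * a₀ * a 1 0 * b 0 1 * b 1 0 + (2 : F) * a₀ * a 1 0 * b 0 0 * b 0 0 + (4 : F) * a₀ * b₀ * a 1 0 * b 0 0 * (2:F)⁻¹ + (-4 : F) * a₀ * b₀ * a 0 0 * b 1 0 * (2:F)⁻¹ + (-1 : F) * a₀ * a₀ * a 1 0 * b 0 1 * b 1 0 + (-1 : F) * a₀ * a₀ * a 1 0 * b 0 0 * b 0 0) * ht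
  · linear_combination (-(2:F)⁻¹) * e11 + ((1 : F) * a 1 1 * b 1 1 * b 1 1 * (2:F)⁻¹ + (-1 : F) * a 1 1 * b 0 1 * b 1 0 + (1 : F) * a 1 1 * b 0 1 * b 1 0 * (2:F)⁻¹ + (1 : F) * a 1 1 * b 0 0 * b 1 1 + (1 : F) * a 1 0 * b 0 1 * b 1 1 * (2:F)⁻¹ + (2 : F) * a 1 0 * b 0 0 * b 0 1 * (2:F)⁻¹ * (2:F)⁻¹ + (1 : F) * a 0 1 * b 0 0 * b 1 0 * (2:F)⁻¹ + (-2 : F) * a 0 1 * b 0 0 * b 1 0 * (2:F)⁻¹ * (2:F)⁻¹ + (1 : F) * a 0 1 * a 1 0 * b 1 1 * b 1 1 * (2:F)⁻¹ + (-1 : F) * a 0 1 * a 1 0 * b 0 1 * b 1 0 + (1 : F) * a 0 1 * a 1 0 * b 0 1 * b 1 0 * (2:F)⁻¹ + (1 : F) * a 0 1 * a 1 0 * b 0 0 * b 1 1 + (-1 : F) * a 0 0 * b 0 1 * b 1 0 * (2:F)⁻¹ + (1 : F) * a 0 0 * b 0 0 * b 1 1 * (2:F)⁻¹ + (-1 :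 F) * a 0 0 * a 1 1 * b 1 1 * b 1 1 * (2:F)⁻¹ + (1 : F) * a 0 0 * a 1 1 * b 0 1 * b 1 0 + (-1 : F) * a 0 0 * a 1 1 * b 0 1 * b 1 0 * (2:F)⁻¹ + (-1 : F) * a 0 0 * a 1 1 * b 0 0 * b 1 1 + (-1 : F) * a 0 0 * a 1 0 * b 0 1 * b 1 1 * (2:F)⁻¹ + (-1 : F) * a 0 0 * a 1 0 * b 0 0 * b 0 1 * (2:F)⁻¹ + (1 : F) * a 0 0 * a 0 0 * b 1 1 * b 1 1 * (2:F)⁻¹ + (-1 : F) * a 0 0 * a 0 0 * b 0 1 * b 1 0 + (2 : F) * a 0 0 * a 0 0 * b 0 1 * b 1 0 * (2:F)⁻¹ + (1 : F) * a 0 0 * a 0 0 * b 0 0 * b 1 1 + (-1 : F) * a 0 0 * a 0 0 * b 0 0 * b 1 1 * (2:F)⁻¹ + (-1 : F) * b₀ * a 1 0 * b 0 1 * (2:F)⁻¹ + (2 : F) * b₀ * a 1 0 * b 0 1 * (2:F)⁻¹ * (2:F)⁻¹ + (1 : F) * b₀ * a 0 1 * b 1 0 * (2:F)⁻¹ + (-2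 : F) * b₀ * a 0 1 * b 1 0 * (2:F)⁻¹ * (2:F)⁻¹ + (2 : F) * a₀ * b 1 1 * b 1 1 * (2:F)⁻¹ + (-2 : F) * a₀ * b 0 1 * b 1 0 + (2 : F) * a₀ * b 0 1 * b 1 0 * (2:F)⁻¹ + (2 : F) * a₀ * b 0 0 * b 1 1 + (-1 : F) * a₀ * a 1 1 * b 1 1 * b 1 1 * (2:F)⁻¹ + (1 : F) * a₀ * a 1 1 * b 0 1 * b 1 0 + (-1 : F) * a₀ * a 1 1 * b 0 1 * b 1 0 * (2:F)⁻¹ + (-1 : F) * a₀ * a 1 1 * b 0 0 * b 1 1 + (-1 : F) * a₀ * a 1 0 * b 0 1 * b 1 1 * (2:F)⁻¹ + (-1 : F) * a₀ * a 1 0 * b 0 0 * b 0 1 * (2:F)⁻¹ + (1 : F) * a₀ * a 0 0 * b 0 1 * b 1 0 * (2:F)⁻¹ + (-1 : F) * a₀ * a 0 0 * b 0 0 * b 1 1 * (2:F)⁻¹ + (-1 : F) * a₀ * a₀ * b 1 1 * b 1 1 * (2:F)⁻¹ + (1 : F) * a₀ * a₀ * b 0 1 * b 1 0 + (-1 : F)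 * a₀ * a₀ * b 0 1 * b 1 0 * (2:F)⁻¹ + (-1 : F) * a₀ * a₀ * b 0 0 * b 1 1) * ha + ((1 : F) * a 0 1 * a 1 0 * a 1 0 * b 0 1 * (2:F)⁻¹ + (-1 : F) * a 0 0 * a 1 0 * b 0 1 * (2:F)⁻¹ + (2 : F) * a 0 0 * a 1 0 * b 0 1 * (2:F)⁻¹ * (2:F)⁻¹ + (1 : F) * a 0 0 * a 0 1 * b 1 0 * (2:F)⁻¹ + (-2 : F) * a 0 0 * a 0 1 * b 1 0 * (2:F)⁻¹ * (2:F)⁻¹ + (-1 : F) * a 0 0 * a 0 1 * a 1 0 * b 1 1 * (2:F)⁻¹ + (-1 : F) * a 0 0 * a 0 1 * a 1 0 * b 0 0 + (2 : F) * a 0 0 * a 0 1 * a 1 0 * b 0 0 * (2:F)⁻¹ + (1 : F) * a 0 0 * a 0 0 * a 1 0 * b 0 1 * (2:F)⁻¹ + (-1 : F) * a 0 0 * a 0 0 * a 0 0 * b 1 1 * (2:F)⁻¹ + (-1 : F) * a 0 0 * a 0 0 * a 0 0 * b 0 0 + (2 : F) * a 0 0 * a 0 0 * a 0 0 * b 0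 0 * (2:F)⁻¹ + (1 : F) * a₀ * a 1 0 * b 0 1 * (2:F)⁻¹ + (2 : F) * a₀ * a 1 0 * b 0 1 * (2:F)⁻¹ * (2:F)⁻¹ + (1 : F) * a₀ * a 0 1 * b 1 0 * (2:F)⁻¹ + (-2 : F) * a₀ * a 0 1 * b 1 0 * (2:F)⁻¹ * (2:F)⁻¹ + (-2 : F) * a₀ * a 0 0 * b 1 1 * (2:F)⁻¹ + (-2 : F) * a₀ * a 0 0 * b 0 0 + (4 : F) * a₀ * a 0 0 * b 0 0 * (2:F)⁻¹ + (-1 : F) * a₀ * a₀ * a 1 0 * b 0 1 * (2:F)⁻¹ + (1 : F) * a₀ * a₀ * a 0 0 * b 1 1 * (2:F)⁻¹ + (1 : F) * a₀ * a₀ * a 0 0 * b 0 0 + (-2 : F) * a₀ * a₀ * a 0 0 * b 0 0 * (2:F)⁻¹) * hb + ((-1 : F) * a 1 0 * a 1 0 * b 0 1 * b 0 1 * (2:F)⁻¹ + (1 : F) * a 0 1 * a 0 1 * b 1 0 * b 1 0 * (2:F)⁻¹ + (-2 : F) * a 0 0 * a 1 0 * b 0 0 * b 0 1 * (2:F)⁻¹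 + (2 : F) * a 0 0 * a 0 1 * b 0 0 * b 1 0 * (2:F)⁻¹ + (-1 : F) * a 0 0 * a 0 1 * a 1 0 * b 0 1 * b 1 0 + (-1 : F) * a 0 0 * a 0 1 * a 1 0 * b 0 0 * b 0 0 + (-1 : F) * a 0 0 * a 0 0 * a 0 0 * b 0 1 * b 1 0 + (-1 : F) * a 0 0 * a 0 0 * a 0 0 * b 0 0 * b 0 0 + (-2 : F) * a₀ * a 0 0 * b 0 1 * b 1 0 + (-2 : F) * a₀ * a 0 0 * b 0 0 * b 0 0 + (2 : F) * a₀ * b₀ * a 1 0 * b 0 1 * (2:F)⁻¹ + (-2 : F) * a₀ * b₀ * a 0 1 * b 1 0 * (2:F)⁻¹ + (1 : F) * a₀ * a₀ * a 0 0 * b 0 1 * b 1 0 + (1 : F) * a₀ * a₀ * a 0 0 * b 0 0 * b 0 0) * ht
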